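/- Let X be a square-integrable real random variable with absolutely continuous law, and f : ℝ → ℝ measurable, nondecreasing, non-constant on the support of X, with f(X) square-integrable and Var[f(X)] > 0 and Var[X] > 0. Then the Pearson correlation coefficient ρ_{X, f(X)} = Cov(X, f(X)) / sqrt(Var[X] · Var[f(X)]) is nonnegative. -/

import Mathlib

/-! Chebyshev's argument: for independent copies `ω, ω'` (the product measure `μ.prod μ`),
`2 Cov(X, Y) = E[(X ω - X ω') (Y ω - Y ω')]`, and for `Y = f ∘ X` with `f` monotone the
integrand is nonnegative pointwise. -/

open MeasureTheory ProbabilityTheory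

namespace ProbabilityTheory

variable {Ω Ω' : Type*} [MeasurableSpace Ω] [MeasurableSpace Ω'] {μ : Measure Ω} {ν : Measure Ω'}

lemma integral_fun_fst_sub_fun_snd [IsFiniteMeasure μ] {Z : Ω → ℝ} (hZ : Integrable Z μ) :
    ∫ p, (Z p.1 - Z p.2) ∂(μ.prod μ) = 0 := by
  rw [integral_sub (hZ.comp_fst μ) (hZ.comp_snd μ), integral_fun_fst, integral_fun_snd, sub_self]

variable [IsProbabilityMeasure μ] [IsProbabilityMeasure ν]

lemma covariance_fun_fst_prod (X Y : Ω → ℝ) :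
    cov[fun p ↦ X p.1, fun p ↦ Y p.1; μ.prod ν] = cov[X, Y; μ] := by
  simp only [covariance, integral_fun_fst X, integral_fun_fst Y, probReal_univ, one_smul]
  simpa using integral_fun_fst (fun ω ↦ (X ω - μ[X]) * (Y ω - μ[Y])) (ν := ν)

lemma covariance_fun_snd_prod (X Y : Ω' → ℝ) :
    cov[fun p ↦ X p.2, fun p ↦ Y p.2; μ.prod ν] = cov[X, Y; ν] := by
  simp only [covariance, integral_fun_snd X, integral_fun_snd Y, probReal_univ, one_smul]
  simpa using integral_fun_snd (fun ω ↦ (X ω - ν[X]) * (Y ω - ν[Y])) (μ := μ)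

lemma two_mul_covariance_eq_integral_prod {X Y : Ω → ℝ} (hX : MemLp X 2 μ) (hY : MemLp Y 2 μ) :
    2 * cov[X, Y; μ] = ∫ p, (X p.1 - X p.2) * (Y p.1 - Y p.2) ∂(μ.prod μ) := by
  have hcentred : ∫ p, (X p.1 - X p.2) * (Y p.1 - Y p.2) ∂(μ.prod μ)
      = cov[fun p ↦ X p.1 - X p.2, fun p ↦ Y p.1 - Y p.2; μ.prod μ] := by
    rw [covariance, integral_fun_fst_sub_fun_snd (hX.integrable one_le_two),
      integral_fun_fst_sub_fun_snd (hY.integrable one_le_two)]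
    simp only [sub_zero]
  rw [hcentred, covariance_fun_sub_fun_sub (hX.comp_fst μ) (hX.comp_snd μ) (hY.comp_fst μ)
      (hY.comp_snd μ), covariance_fun_fst_prod, covariance_fun_snd_prod,
    covariance_fst_snd_prod hX hY, covariance_comm (fun p : Ω × Ω ↦ X p.2),
    covariance_fst_snd_prod hY hX]
  ring

lemma covariance_nonneg_of_monovary {X Y : Ω → ℝ} (hX : MemLp X 2 μ) (hY : MemLp Y 2 μ)
    (hXY : Monovary Y X) : 0 ≤ cov[X, Y; μ] := by
  have h : 0 ≤ ∫ p, (X p.1 - X p.2) * (Y p.1 - Y p.2) ∂(μ.prod μ) :=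
    integral_nonneg fun p ↦ by
      rw [Pi.zero_apply, mul_comm]
      exact hXY.sub_mul_sub_nonneg p.2 p.1
  linarith [two_mul_covariance_eq_integral_prod hX hY]

end ProbabilityTheory

theorem pearson_corr_nonneg_of_monotone_general
    {Ω : Type*} [MeasurableSpace Ω] (μ : Measure Ω) [IsProbabilityMeasure μ]
    (X : Ω → ℝ)
    (hX2 : MemLp X 2 μ)
    (f : ℝ → ℝ) (hmono : Monotone f)
    (hfX2 : MemLp (fun ω => f (X ω)) 2 μ) :
    0 ≤ (∫ ω, (X ω - ∫ ω', X ω' ∂μ) * (f (X ω) - ∫ ω', f (X ω') ∂μ) ∂μ) /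
      Real.sqrt ((∫ ω, (X ω - ∫ ω', X ω' ∂μ) ^ 2 ∂μ) *
        (∫ ω, (f (X ω) - ∫ ω', f (X ω') ∂μ) ^ 2 ∂μ)) :=
  div_nonneg (covariance_nonneg_of_monovary hX2 hfX2 ((monovary_self X).comp_monotone_left hmono))
    (Real.sqrt_nonneg _)

theorem pearson_corr_nonneg_of_monotone
    {Ω : Type*} [MeasurableSpace Ω] (μ : Measure Ω) [IsProbabilityMeasure μ]
    (X : Ω → ℝ) (hXm : Measurable X)
    (habs : μ.map X ≪ (volume : Measure ℝ))
    (hX2 : MemLp X 2 μ)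
    (f : ℝ → ℝ) (hfm : Measurable f) (hmono : Monotone f)
    (hfX2 : MemLp (fun ω => f (X ω)) 2 μ)
    (hvarX : 0 < ∫ ω, (X ω - ∫ ω', X ω' ∂μ) ^ 2 ∂μ)
    (hvarfX : 0 < ∫ ω, (f (X ω) - ∫ ω', f (X ω') ∂μ) ^ 2 ∂μ) :
    0 ≤ (∫ ω, (X ω - ∫ ω', X ω' ∂μ) * (f (X ω) - ∫ ω', f (X ω') ∂μ) ∂μ) /
      Real.sqrt ((∫ ω, (X ω - ∫ ω', X ω' ∂μ) ^ 2 ∂μ) *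
        (∫ ω, (f (X ω) - ∫ ω', f (X ω') ∂μ) ^ 2 ∂μ)) :=
  pearson_corr_nonneg_of_monotone_general μ X hX2 f hmono hfX2
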